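/- arXiv:1809.08994 — 3 statements merged into one kernel-verified Lean document; each statement's English description precedes it below -/
import Mathlib

section
/- For all real numbers a > 0 and b > 0 with a ≠ b, the improper integral ∫₀^∞ b·log(1+ax)/(1+bx)² dx converges and equals a·log(a/b)/(a−b), where log is the natural logarithm. -/
/-!
Integrating by parts against `-1 / (1 + b x)` and splitting `a / ((1 + a x)(1 + b x))` into
partial fractions yields the antiderivative `logOneAddDivSqAntideriv a b`, which vanishes at `0`
and tends to `a / (a - b) · log (a / b)` at infinity. The integrand is nonnegative, so the improper
fundamental theorem of calculus gives both integrability and the value.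
-/

open MeasureTheory Set Filter Topology Real

noncomputable def logOneAddDivSqAntideriv (a b x : ℝ) : ℝ :=
  a / (a - b) * (log (1 + a * x) - log (1 + b * x)) - log (1 + a * x) / (1 + b * x)

lemma hasDerivAt_one_add_mul (a x : ℝ) : HasDerivAt (fun y : ℝ => 1 + a * y) a x := by
  simpa using ((hasDerivAt_id x).const_mul a).const_add 1

lemma hasDerivAt_logOneAddDivSqAntideriv {a b x : ℝ} (hab : a ≠ b)
    (hax : 1 + a * x ≠ 0) (hbx : 1 + b * x ≠ 0) :
    HasDerivAt (logOneAddDivSqAntideriv a b) (b * log (1 + a * x) / (1 + b * x) ^ 2) x := by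
  have hloga : HasDerivAt (fun y => log (1 + a * y)) (a / (1 + a * x)) x :=
    (hasDerivAt_one_add_mul a x).log hax
  have hlogb : HasDerivAt (fun y => log (1 + b * y)) (b / (1 + b * x)) x :=
    (hasDerivAt_one_add_mul b x).log hbx
  have hsub : a - b ≠ 0 := sub_ne_zero.mpr hab
  refine (((hloga.sub hlogb).const_mul (a / (a - b))).sub
    (hloga.div (hasDerivAt_one_add_mul b x) hbx)).congr_deriv ?_
  field_simp
  ring

lemma tendsto_one_add_mul_div_one_add_mul_atTop (a : ℝ) {b : ℝ} (hb : b ≠ 0) :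
    Tendsto (fun x : ℝ => (1 + a * x) / (1 + b * x)) atTop (𝓝 (a / b)) := by
  have h : Tendsto (fun x : ℝ => (x⁻¹ + a) / (x⁻¹ + b)) atTop (𝓝 ((0 + a) / (0 + b))) :=
    (tendsto_inv_atTop_zero.add tendsto_const_nhds).div
      (tendsto_inv_atTop_zero.add tendsto_const_nhds) (by simpa using hb)
  rw [zero_add, zero_add] at h
  refine h.congr' ?_
  filter_upwards [eventually_gt_atTop (0 : ℝ)] with x hx
  field_simp

lemma tendsto_log_one_add_mul_div_one_add_mul_atTop {a b : ℝ} (ha : 0 < a) (hb : 0 < b) :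
    Tendsto (fun x : ℝ => log (1 + a * x) / (1 + b * x)) atTop (𝓝 0) := by
  have hlin : Tendsto (fun x : ℝ => 1 + a * x) atTop atTop :=
    tendsto_atTop_add_const_left _ _ (tendsto_id.const_mul_atTop ha)
  have h := ((isLittleO_log_id_atTop.tendsto_div_nhds_zero.comp hlin).mul
    (tendsto_one_add_mul_div_one_add_mul_atTop a hb.ne'))
  rw [zero_mul] at h
  refine h.congr' ?_
  filter_upwards [eventually_gt_atTop (0 : ℝ)] with x hx
  have hax : 1 + a * x ≠ 0 := by positivity
  simp only [Function.comp_def, id]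
  field_simp

lemma tendsto_log_one_add_mul_sub_log_one_add_mul_atTop {a b : ℝ} (ha : 0 < a) (hb : 0 < b) :
    Tendsto (fun x : ℝ => log (1 + a * x) - log (1 + b * x)) atTop (𝓝 (log (a / b))) := by
  refine (((continuousAt_log (div_pos ha hb).ne').tendsto).comp
    (tendsto_one_add_mul_div_one_add_mul_atTop a hb.ne')).congr' ?_
  filter_upwards [eventually_gt_atTop (0 : ℝ)] with x hx
  exact log_div (by positivity) (by positivity)

/-- Gradshteyn–Ryzhik 4.291-17: `∫₀^∞ b·log(1+ax)/(1+bx)² dx = a·log(a/b)/(a−b)`. -/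
theorem integral_log_one_add_div_sq
    (a b : ℝ) (ha : 0 < a) (hb : 0 < b) (hab : a ≠ b) :
    IntegrableOn (fun x : ℝ => b * Real.log (1 + a * x) / (1 + b * x) ^ 2) (Ioi 0) volume ∧
      ∫ x in Ioi (0 : ℝ), b * Real.log (1 + a * x) / (1 + b * x) ^ 2
        = a * Real.log (a / b) / (a - b) := by
  have hderiv : ∀ x ∈ Ici (0 : ℝ), HasDerivAt (logOneAddDivSqAntideriv a b)
      (b * log (1 + a * x) / (1 + b * x) ^ 2) x := fun x (hx : 0 ≤ x) =>
    hasDerivAt_logOneAddDivSqAntideriv hab (by positivity) (by positivity)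
  have hnonneg : ∀ x ∈ Ioi (0 : ℝ), 0 ≤ b * log (1 + a * x) / (1 + b * x) ^ 2 :=
    fun x (hx : 0 < x) => by
      have : 0 ≤ log (1 + a * x) := log_nonneg (le_add_of_nonneg_right (by positivity))
      positivity
  have hlim : Tendsto (logOneAddDivSqAntideriv a b) atTop
      (𝓝 (a / (a - b) * log (a / b) - 0)) :=
    ((tendsto_log_one_add_mul_sub_log_one_add_mul_atTop ha hb).const_mul _).sub
      (tendsto_log_one_add_mul_div_one_add_mul_atTop ha hb)
  refine ⟨integrableOn_Ioi_deriv_of_nonneg' hderiv hnonneg hlim, ?_⟩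
  rw [integral_Ioi_of_hasDerivAt_of_nonneg' hderiv hnonneg hlim]
  simp only [logOneAddDivSqAntideriv, mul_zero, add_zero, log_one, sub_self, div_one, sub_zero]
  ring
end

section
/- Let a, b, c be pairwise distinct positive real numbers. Then the improper integral ∫₀^∞ dx/[(1+ax)(1+bx)(1+cx)] converges and equals a·log(a)/[(a−b)(a−c)] + b·log(b)/[(b−a)(b−c)] + c·log(c)/[(c−a)(c−b)], where log is the natural logarithm. -/
open MeasureTheory Set Filter Topology

/-!
The function `F x = A log(1 + a x) + B log(1 + b x) + C log(1 + c x)`, with `A, B, C` the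
partial-fraction coefficients `a / ((a - b)(a - c))` etc., is an antiderivative of the positive
integrand and vanishes at `0`. Since `A + B + C = 0`, the `log x` growth of the three terms cancels
and `F x → A log a + B log b + C log c` as `x → ∞`, which is therefore the value of the integral.
-/

theorem hasDerivAt_log_one_add_mul {t x : ℝ} (h : 1 + t * x ≠ 0) :
    HasDerivAt (fun y => Real.log (1 + t * y)) (t / (1 + t * x)) x := by
  simpa using (((hasDerivAt_id x).const_mul t).const_add 1).log h

theorem tendsto_log_one_add_mul_sub_log {t : ℝ} (ht : 0 < t) :
    Tendsto (fun x => Real.log (1 + t * x) - Real.log x) atTop (𝓝 (Real.log t)) := by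
  have hlim : Tendsto (fun x : ℝ => Real.log (x⁻¹ + t)) atTop (𝓝 (Real.log t)) :=
    ((Real.continuousAt_log ht.ne').tendsto).comp
      (by simpa using tendsto_inv_atTop_zero.add_const t)
  refine hlim.congr' ?_
  filter_upwards [eventually_gt_atTop 0] with x hx
  rw [show 1 + t * x = x * (x⁻¹ + t) by field_simp, Real.log_mul hx.ne' (by positivity)]
  ring

namespace ThreeLinearFactors

/-- Coefficient of `a / (1 + a x)` in the partial-fraction expansion of
`1 / ((1 + a x)(1 + b x)(1 + c x))`. -/
noncomputable def coeff (a b c : ℝ) : ℝ := a / ((a - b) * (a - c))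

noncomputable def logAntideriv (a b c x : ℝ) : ℝ :=
  coeff a b c * Real.log (1 + a * x) + coeff b a c * Real.log (1 + b * x)
    + coeff c a b * Real.log (1 + c * x)

@[simp]
theorem logAntideriv_zero (a b c : ℝ) : logAntideriv a b c 0 = 0 := by
  simp [logAntideriv]

section Distinct

variable {a b c : ℝ} (hab : a ≠ b) (hac : a ≠ c) (hbc : b ≠ c)
include hab hac hbc

theorem coeff_add_coeff_add_coeff : coeff a b c + coeff b a c + coeff c a b = 0 := by
  have := sub_ne_zero.2 hab; have := sub_ne_zero.2 hac; have := sub_ne_zero.2 hbc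
  unfold coeff
  field_simp
  ring

theorem one_div_mul_mul_eq_sum_coeff {x : ℝ} (ha : 1 + a * x ≠ 0) (hb : 1 + b * x ≠ 0)
    (hc : 1 + c * x ≠ 0) :
    1 / ((1 + a * x) * (1 + b * x) * (1 + c * x))
      = coeff a b c * (a / (1 + a * x)) + coeff b a c * (b / (1 + b * x))
        + coeff c a b * (c / (1 + c * x)) := by
  have := sub_ne_zero.2 hab; have := sub_ne_zero.2 hac; have := sub_ne_zero.2 hbc
  have := sub_ne_zero.2 hab.symm; have := sub_ne_zero.2 hac.symm; have := sub_ne_zero.2 hbc.symm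
  unfold coeff
  symm
  field_simp
  ring

theorem hasDerivAt_logAntideriv {x : ℝ} (ha : 1 + a * x ≠ 0) (hb : 1 + b * x ≠ 0)
    (hc : 1 + c * x ≠ 0) :
    HasDerivAt (logAntideriv a b c) (1 / ((1 + a * x) * (1 + b * x) * (1 + c * x))) x := by
  rw [one_div_mul_mul_eq_sum_coeff hab hac hbc ha hb hc]
  exact (((hasDerivAt_log_one_add_mul ha).const_mul _).add
    ((hasDerivAt_log_one_add_mul hb).const_mul _)).add
    ((hasDerivAt_log_one_add_mul hc).const_mul _)

theorem tendsto_logAntideriv (ha : 0 < a) (hb : 0 < b) (hc : 0 < c) :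
    Tendsto (logAntideriv a b c) atTop
      (𝓝 (coeff a b c * Real.log a + coeff b a c * Real.log b + coeff c a b * Real.log c)) := by
  have hlim := (((tendsto_log_one_add_mul_sub_log ha).const_mul (coeff a b c)).add
    ((tendsto_log_one_add_mul_sub_log hb).const_mul (coeff b a c))).add
    ((tendsto_log_one_add_mul_sub_log hc).const_mul (coeff c a b))
  refine hlim.congr fun x => ?_
  -- the `log x` terms cancel since the coefficients sum to zero
  simp only [logAntideriv]
  linear_combination (-Real.log x) * coeff_add_coeff_add_coeff hab hac hbc

end Distinct

end ThreeLinearFactors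

open ThreeLinearFactors

/-- Partial-fraction integral identity for three distinct linear factors:
`∫₀^∞ dx/[(1+ax)(1+bx)(1+cx)]` converges and has the stated closed form. -/
theorem integral_inv_three_linear_factors
    (a b c : ℝ) (ha : 0 < a) (hb : 0 < b) (hc : 0 < c)
    (hab : a ≠ b) (hac : a ≠ c) (hbc : b ≠ c) :
    IntegrableOn (fun x : ℝ => 1 / ((1 + a * x) * (1 + b * x) * (1 + c * x))) (Ioi 0) volume ∧
      ∫ x in Ioi (0 : ℝ), 1 / ((1 + a * x) * (1 + b * x) * (1 + c * x))
        = a * Real.log a / ((a - b) * (a - c))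
          + b * Real.log b / ((b - a) * (b - c))
          + c * Real.log c / ((c - a) * (c - b)) := by
  have hderiv : ∀ x ∈ Ici (0 : ℝ),
      HasDerivAt (logAntideriv a b c) (1 / ((1 + a * x) * (1 + b * x) * (1 + c * x))) x :=
    fun x (hx : 0 ≤ x) => hasDerivAt_logAntideriv hab hac hbc
      (by positivity) (by positivity) (by positivity)
  have hcont : ContinuousWithinAt (logAntideriv a b c) (Ici 0) 0 :=
    (hderiv 0 self_mem_Ici).continuousAt.continuousWithinAt
  have hderivIoi := fun x (hx : x ∈ Ioi (0 : ℝ)) => hderiv x (Ioi_subset_Ici_self hx)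
  have hnonneg : ∀ x ∈ Ioi (0 : ℝ), 0 ≤ 1 / ((1 + a * x) * (1 + b * x) * (1 + c * x)) :=
    fun x (hx : 0 < x) => by positivity
  have hlim := tendsto_logAntideriv hab hac hbc ha hb hc
  refine ⟨integrableOn_Ioi_deriv_of_nonneg hcont hderivIoi hnonneg hlim, ?_⟩
  rw [integral_Ioi_of_hasDerivAt_of_nonneg hcont hderivIoi hnonneg hlim, logAntideriv_zero,
    sub_zero]
  simp only [coeff, mul_div_right_comm]
end

section
/- Let N_r, N_d ≥ 1 be integers and Ω_sr, Ω_sd, Ω_sp > 0. Let δ_sr be the maximum of N_r i.i.d. exponential random variables with mean Ω_sr, δ_sd the maximum of N_d i.i.d. exponential random variables with mean Ω_sd, and λ_sp an exponential random variable with mean Ω_sp, all mutually independent. Then 𝒳 = min{δ_sr, δ_sd}/λ_sp has probability density function x ↦ Σ_{k=1}^{N_r} Σ_{j=1}^{N_d} (−1)^{k+j} C(N_r,k) C(N_d,j) · (ξ_{k,j}/Ω_sp)·(ξ_{k,j}x + 1/Ω_sp)^{−2} on [0,∞), where ξ_{k,j} = k/Ω_sr + j/Ω_sd and C(n,k) is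 the binomial coefficient. -/
/-! By independence, the survival function of `W = min (⨆ i, X i) (⨆ j, Y j)` factorises as
`(1 - (1 - e^{-t/Ωsr})^Nr) (1 - (1 - e^{-t/Ωsd})^Nd)`, which the binomial theorem expands into the
signed exponential mixture `∑ c_{kj} e^{-ξ_{kj} t}`, with `∑ c_{kj} = 1`. Conditioning on the
independent `Z ~ Exp(a)`, `a = 1/Ωsp`, turns each term into a Laplace transform of `Z`, so
`P(W/Z ≤ x) = 1 - ∑ c_{kj} a/(ξ_{kj} x + a)` for `x ≥ 0`. This CDF is differentiable on `[0, ∞)` and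
its derivative is the claimed density; that the alternating sum is nonnegative comes for free
from the monotonicity of a CDF. -/

open MeasureTheory Set ProbabilityTheory

open Real

theorem one_sub_one_sub_pow_eq_sum (u : ℝ) (N : ℕ) :
    1 - (1 - u) ^ N = ∑ k ∈ Finset.Icc 1 N, (-1) ^ (k + 1) * (N.choose k : ℝ) * u ^ k := by
  have hbinom : (1 - u) ^ N = ∑ k ∈ Finset.range (N + 1), (-1) ^ k * (N.choose k : ℝ) * u ^ k := by
    rw [sub_eq_add_neg, add_comm, add_pow]
    refine Finset.sum_congr rfl fun k _ => ?_
    rw [neg_pow, one_pow]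
    ring
  rw [hbinom, Finset.range_eq_Ico, Finset.sum_eq_sum_Ico_succ_bot N.succ_pos, Nat.succ_eq_add_one,
    zero_add, Finset.Ico_add_one_right_eq_Icc]
  simp [pow_succ, Finset.sum_neg_distrib]

theorem one_sub_one_sub_exp_pow_mul_eq_sum (a b t : ℝ) (M N : ℕ) :
    (1 - (1 - exp (-(a * t))) ^ M) * (1 - (1 - exp (-(b * t))) ^ N)
      = ∑ p ∈ Finset.Icc 1 M ×ˢ Finset.Icc 1 N,
          (-1) ^ (p.1 + p.2) * (M.choose p.1 : ℝ) * (N.choose p.2 : ℝ)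
            * exp (-((p.1 * a + p.2 * b) * t)) := by
  rw [one_sub_one_sub_pow_eq_sum, one_sub_one_sub_pow_eq_sum, Finset.sum_mul_sum,
    Finset.sum_product]
  refine Finset.sum_congr rfl fun k _ => Finset.sum_congr rfl fun j _ => ?_
  rw [← exp_nat_mul, ← exp_nat_mul, add_mul, neg_add, exp_add]
  ring_nf

theorem hasDerivAt_sum_mul_div_mul_add {ι : Type*} (s : Finset ι) (c ξ : ι → ℝ) {a x : ℝ}
    (hx : ∀ i ∈ s, ξ i * x + a ≠ 0) :
    HasDerivAt (fun y => ∑ i ∈ s, c i * (a / (ξ i * y + a)))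
      (-∑ i ∈ s, c i * (ξ i * a * ((ξ i * x + a) ^ 2)⁻¹)) x := by
  rw [← Finset.sum_neg_distrib]
  refine HasDerivAt.fun_sum fun i hi => ?_
  have hlin : HasDerivAt (fun y => ξ i * y + a) (ξ i) x := by
    simpa using ((hasDerivAt_id x).const_mul (ξ i)).add_const a
  simp only [div_eq_mul_inv]
  refine (((hlin.inv (hx i hi)).const_mul a).const_mul (c i)).congr_deriv ?_
  ring

theorem MeasureTheory.Measure.eq_withDensity_of_hasDerivAt {μ : Measure ℝ} [IsFiniteMeasure μ]
    {G g : ℝ → ℝ} (h0 : μ (Iic 0) = 0) (hG : ∀ x, 0 ≤ x → μ.real (Iic x) = G x)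
    (hderiv : ∀ x, 0 ≤ x → HasDerivAt G (g x) x) :
    μ = volume.withDensity (fun x => ENNReal.ofReal (indicator (Ici 0) g x)) := by
  have hmono : MonotoneOn G (Ici 0) := fun u hu v hv huv => by
    rw [← hG u hu, ← hG v hv]
    exact measureReal_mono (Iic_subset_Iic.mpr huv)
  have hg_nonneg : ∀ x, 0 ≤ x → 0 ≤ g x := fun x hx =>
    (hderiv x hx).hasDerivWithinAt.nonneg_of_monotoneOn
      (accPt_principal_iff_nhdsWithin.mpr (by simpa using nhdsGT_neBot x))
      (hmono.mono (Ioi_subset_Ici hx))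
  refine Measure.ext_of_Iic _ _ fun x => ?_
  rw [withDensity_apply _ measurableSet_Iic]
  rcases lt_or_ge x 0 with hx | hx
  · rw [measure_mono_null (Iic_subset_Iic.mpr hx.le) h0, eq_comm]
    refine setLIntegral_eq_zero measurableSet_Iic fun t (ht : t ≤ x) => ?_
    simp [indicator_of_notMem (show t ∉ Ici 0 from not_le.mpr (ht.trans_lt hx))]
  have hderiv' : ∀ t ∈ Ioo 0 x, HasDerivAt G (g t) t := fun t ht => hderiv t ht.1.le
  have hGcont : ContinuousOn G (Icc 0 x) := fun t ht =>
    (hderiv t ht.1).continuousAt.continuousWithinAt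
  have hint : IntegrableOn g (Ioc 0 x) :=
    intervalIntegral.integrableOn_deriv_of_nonneg hGcont hderiv' fun t ht => hg_nonneg t ht.1.le
  have hG0 : G 0 = 0 := by rw [← hG 0 le_rfl, measureReal_def, h0, ENNReal.toReal_zero]
  have hFTC : ∫ t in (0)..x, g t = G x - G 0 :=
    intervalIntegral.integral_eq_sub_of_hasDerivAt_of_le hx hGcont hderiv'
      ((intervalIntegrable_iff_integrableOn_Ioc_of_le hx).mpr hint)
  have hindicator : (fun t => ENNReal.ofReal (indicator (Ici 0) g t))
      = indicator (Ici 0) (fun t => ENNReal.ofReal (g t)) :=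
    (indicator_comp_of_zero ENNReal.ofReal_zero).symm
  rw [hindicator, setLIntegral_indicator measurableSet_Ici, Ici_inter_Iic,
    setLIntegral_congr Ioc_ae_eq_Icc.symm,
    ← ofReal_integral_eq_lintegral_ofReal hint
      ((ae_restrict_iff' measurableSet_Ioc).mpr (ae_of_all _ fun t ht => hg_nonneg t ht.1.le)),
    ← intervalIntegral.integral_of_le hx, hFTC, hG0, sub_zero, ← hG x hx, ofReal_measureReal]

namespace ProbabilityTheory

theorem expMeasure_eq_withDensity (r : ℝ) :
    expMeasure r = volume.withDensity (exponentialPDF r) := rfl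

theorem measurable_exponentialPDF (r : ℝ) : Measurable (exponentialPDF r) :=
  (measurable_exponentialPDFReal r).ennreal_ofReal

theorem ae_pos_expMeasure {r : ℝ} (hr : 0 < r) : ∀ᵐ z ∂expMeasure r, 0 < z := by
  simp only [ae_iff, not_lt, expMeasure_eq_withDensity]
  refine (withDensity_apply _ measurableSet_Iic).trans ?_
  rw [lintegral_exponentialPDF_eq_antiDeriv hr]
  simp

theorem exponentialPDF_mul_exp_neg_mul {r b : ℝ} (hr : 0 < r) (hrb : 0 < r + b) (z : ℝ) :
    exponentialPDF r z * ENNReal.ofReal (exp (-(b * z)))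
      = ENNReal.ofReal (r / (r + b)) * exponentialPDF (r + b) z := by
  rcases lt_or_ge z 0 with hz | hz
  · simp [exponentialPDF_of_neg hz]
  rw [exponentialPDF_of_nonneg hz, exponentialPDF_of_nonneg hz,
    ← ENNReal.ofReal_mul (by positivity), ← ENNReal.ofReal_mul (by positivity)]
  congr 1
  field_simp
  rw [← exp_add]
  ring_nf

theorem lintegral_exp_neg_mul_expMeasure {r b : ℝ} (hr : 0 < r) (hrb : 0 < r + b) :
    ∫⁻ z, ENNReal.ofReal (exp (-(b * z))) ∂expMeasure r = ENNReal.ofReal (r / (r + b)) := by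
  rw [expMeasure_eq_withDensity,
    lintegral_withDensity_eq_lintegral_mul _ (measurable_exponentialPDF r) (by fun_prop)]
  simp_rw [Pi.mul_apply, exponentialPDF_mul_exp_neg_mul hr hrb]
  rw [lintegral_const_mul _ (measurable_exponentialPDF _), lintegral_exponentialPDF_eq_one hrb,
    mul_one]

theorem integrable_exp_neg_mul_expMeasure {r b : ℝ} (hr : 0 < r) (hrb : 0 < r + b) :
    Integrable (fun z => exp (-(b * z))) (expMeasure r) := by
  refine ⟨by fun_prop, ?_⟩
  rw [hasFiniteIntegral_iff_ofReal (ae_of_all _ fun z => (exp_pos _).le),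
    lintegral_exp_neg_mul_expMeasure hr hrb]
  exact ENNReal.ofReal_lt_top

theorem integral_exp_neg_mul_expMeasure {r b : ℝ} (hr : 0 < r) (hrb : 0 < r + b) :
    ∫ z, exp (-(b * z)) ∂expMeasure r = r / (r + b) := by
  rw [integral_eq_lintegral_of_nonneg_ae (ae_of_all _ fun z => (exp_pos _).le) (by fun_prop),
    lintegral_exp_neg_mul_expMeasure hr hrb, ENNReal.toReal_ofReal (by positivity)]

variable {Ω : Type*} [MeasurableSpace Ω] {P : Measure Ω}

theorem iIndepFun.indepFun_sumElim {ι κ β : Type*} [Fintype ι] [Fintype κ] [MeasurableSpace β]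
    {f : ι → Ω → β} {g : κ → Ω → β} (h : iIndepFun (Sum.elim f g) P)
    (hf : ∀ i, Measurable (f i)) (hg : ∀ j, Measurable (g j)) :
    IndepFun (fun ω i => f i ω) (fun ω j => g j ω) P := by
  classical
  exact (h.indepFun_finset _ _ (Finset.disjoint_map_inl_map_inr Finset.univ Finset.univ)
    (Sum.forall.mpr ⟨hf, hg⟩)).comp
    (φ := fun v i => v ⟨.inl i, by simp⟩) (ψ := fun v j => v ⟨.inr j, by simp⟩)
    (measurable_pi_lambda _ fun _ => measurable_pi_apply _)
    (measurable_pi_lambda _ fun _ => measurable_pi_apply _)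

theorem iIndepFun.measureReal_lt_iSup {ι : Type*} [Fintype ι] [Nonempty ι]
    {X : ι → Ω → ℝ} (h : iIndepFun X P) (hX : ∀ i, Measurable (X i)) (t : ℝ) :
    P.real {ω | t < ⨆ i, X i ω} = 1 - ∏ i, P.real (X i ⁻¹' Iic t) := by
  have := h.isProbabilityMeasure
  have hle : {ω | ⨆ i, X i ω ≤ t} = ⋂ i, X i ⁻¹' Iic t := by
    ext ω
    simp [ciSup_le_iff (finite_range _).bddAbove]
  have hlt : {ω | t < ⨆ i, X i ω} = {ω | ⨆ i, X i ω ≤ t}ᶜ := by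
    ext ω
    simp
  rw [hlt, probReal_compl_eq_one_sub (measurableSet_le (Measurable.iSup hX) measurable_const),
    hle, measureReal_def, h.meas_iInter fun i => ⟨Iic t, measurableSet_Iic, rfl⟩,
    ENNReal.toReal_prod]
  rfl

theorem iIndepFun.measureReal_lt_iSup_of_map_eq_expMeasure {ι : Type*} [Fintype ι] [Nonempty ι]
    {X : ι → Ω → ℝ} (h : iIndepFun X P) (hX : ∀ i, Measurable (X i)) {r : ℝ} (hr : 0 < r)
    (hlaw : ∀ i, P.map (X i) = expMeasure r) {t : ℝ} (ht : 0 ≤ t) :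
    P.real {ω | t < ⨆ i, X i ω} = 1 - (1 - exp (-(r * t))) ^ Fintype.card ι := by
  have := isProbabilityMeasure_expMeasure hr
  have hcdf : ∀ i, P.real (X i ⁻¹' Iic t) = 1 - exp (-(r * t)) := fun i => by
    rw [← map_measureReal_apply (hX i) measurableSet_Iic, hlaw i, ← cdf_eq_real,
      cdf_expMeasure_eq hr, if_pos ht]
  rw [h.measureReal_lt_iSup hX, Finset.prod_congr rfl fun i _ => hcdf i, Finset.prod_const,
    Finset.card_univ]

theorem IndepFun.measureReal_lt_min {A B : Ω → ℝ} (h : IndepFun A B P) (t : ℝ) :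
    P.real {ω | t < min (A ω) (B ω)} = P.real {ω | t < A ω} * P.real {ω | t < B ω} := by
  have hset : {ω | t < min (A ω) (B ω)} = A ⁻¹' Ioi t ∩ B ⁻¹' Ioi t := by
    ext ω
    simp
  rw [hset, measureReal_def, h.measure_inter_preimage_eq_mul _ _ measurableSet_Ioi
    measurableSet_Ioi, ENNReal.toReal_mul]
  rfl

theorem measureReal_map_min_iSup_Iic_of_expMeasure {ι κ : Type*} [Fintype ι] [Nonempty ι]
    [Fintype κ] [Nonempty κ] {X : ι → Ω → ℝ} {Y : κ → Ω → ℝ}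
    (hX : ∀ i, Measurable (X i)) (hY : ∀ j, Measurable (Y j)) (hXY : iIndepFun (Sum.elim X Y) P)
    {rX rY : ℝ} (hrX : 0 < rX) (hrY : 0 < rY)
    (hXlaw : ∀ i, P.map (X i) = expMeasure rX) (hYlaw : ∀ j, P.map (Y j) = expMeasure rY)
    {t : ℝ} (ht : 0 ≤ t) :
    (P.map fun ω => min (⨆ i, X i ω) (⨆ j, Y j ω)).real (Iic t)
      = 1 - (1 - (1 - exp (-(rX * t))) ^ Fintype.card ι)
          * (1 - (1 - exp (-(rY * t))) ^ Fintype.card κ) := by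
  have := hXY.isProbabilityMeasure
  have hindX : iIndepFun X P := hXY.precomp (g := Sum.inl) Sum.inl_injective
  have hindY : iIndepFun Y P := hXY.precomp (g := Sum.inr) Sum.inr_injective
  have hmeas : Measurable fun ω => min (⨆ i, X i ω) (⨆ j, Y j ω) :=
    (Measurable.iSup hX).min (Measurable.iSup hY)
  have hsup : IndepFun (fun ω => ⨆ i, X i ω) (fun ω => ⨆ j, Y j ω) P :=
    (hXY.indepFun_sumElim hX hY).comp (φ := fun v : ι → ℝ => ⨆ i, v i)
      (ψ := fun v : κ → ℝ => ⨆ j, v j)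
      (Measurable.iSup measurable_pi_apply) (Measurable.iSup measurable_pi_apply)
  have hset : (fun ω => min (⨆ i, X i ω) (⨆ j, Y j ω)) ⁻¹' Iic t
      = {ω | t < min (⨆ i, X i ω) (⨆ j, Y j ω)}ᶜ := by
    ext ω
    simp only [mem_preimage, mem_Iic, mem_compl_iff, mem_ofPred_eq, not_lt]
  rw [map_measureReal_apply hmeas measurableSet_Iic, hset,
    probReal_compl_eq_one_sub (measurableSet_lt measurable_const hmeas), hsup.measureReal_lt_min,
    hindX.measureReal_lt_iSup_of_map_eq_expMeasure hX hrX hXlaw ht,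
    hindY.measureReal_lt_iSup_of_map_eq_expMeasure hY hrY hYlaw ht]

variable [IsFiniteMeasure P]

theorem IndepFun.measureReal_map_div_Iic {W Z : Ω → ℝ}
    (hWZ : IndepFun W Z P) (hW : Measurable W) (hZ : Measurable Z) (hZpos : ∀ᵐ ω ∂P, 0 < Z ω)
    (x : ℝ) :
    (P.map fun ω => W ω / Z ω).real (Iic x) = ∫ z, (P.map W).real (Iic (x * z)) ∂(P.map Z) := by
  have hs : MeasurableSet {p : ℝ × ℝ | p.2 ≤ x * p.1} :=
    measurableSet_le measurable_snd (measurable_const.mul measurable_fst)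
  have hae : {ω | W ω / Z ω ≤ x} =ᵐ[P] (fun ω => (Z ω, W ω)) ⁻¹' {p | p.2 ≤ x * p.1} := by
    filter_upwards [hZpos] with ω hz
    exact propext (div_le_iff₀ hz)
  rw [map_measureReal_apply (by fun_prop) measurableSet_Iic, measureReal_def]
  rw [show (fun ω => W ω / Z ω) ⁻¹' Iic x = {ω | W ω / Z ω ≤ x} from rfl, measure_congr hae,
    ← Measure.map_apply (hZ.prodMk hW) hs,
    (indepFun_iff_map_prod_eq_prod_map_map hZ.aemeasurable hW.aemeasurable).mp hWZ.symm,
    Measure.prod_apply hs, ← integral_toReal (measurable_measure_prodMk_left hs).aemeasurable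
      (ae_of_all _ fun _ => measure_lt_top _ _)]
  rfl

theorem IndepFun.measureReal_map_div_Iic_of_expMeasure {ι : Type*} (s : Finset ι) (c ξ : ι → ℝ)
    (hξ : ∀ i ∈ s, 0 ≤ ξ i) {a : ℝ} (ha : 0 < a) {W Z : Ω → ℝ} (hWZ : IndepFun W Z P)
    (hW : Measurable W) (hZ : Measurable Z) (hZlaw : P.map Z = expMeasure a)
    (hWcdf : ∀ t, 0 ≤ t → (P.map W).real (Iic t) = 1 - ∑ i ∈ s, c i * exp (-(ξ i * t)))
    {x : ℝ} (hx : 0 ≤ x) :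
    (P.map fun ω => W ω / Z ω).real (Iic x) = 1 - ∑ i ∈ s, c i * (a / (ξ i * x + a)) := by
  have := isProbabilityMeasure_expMeasure ha
  have hZpos : ∀ᵐ ω ∂P, 0 < Z ω := ae_of_ae_map hZ.aemeasurable (hZlaw ▸ ae_pos_expMeasure ha)
  have hint : ∀ i ∈ s, Integrable (fun z => c i * exp (-(ξ i * x * z))) (expMeasure a) :=
    fun i hi => (integrable_exp_neg_mul_expMeasure ha (by have := hξ i hi; positivity)).const_mul _
  have hae : (fun z => (P.map W).real (Iic (x * z)))
      =ᵐ[expMeasure a] fun z => 1 - ∑ i ∈ s, c i * exp (-(ξ i * x * z)) := by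
    filter_upwards [ae_pos_expMeasure ha] with z hz
    simp_rw [hWcdf (x * z) (by positivity), mul_assoc]
  rw [hWZ.measureReal_map_div_Iic hW hZ hZpos, hZlaw, integral_congr_ae hae,
    integral_sub (integrable_const _) (integrable_finsetSum _ hint), integral_const,
    probReal_univ, one_smul, integral_finsetSum _ hint]
  refine congrArg _ (Finset.sum_congr rfl fun i hi => ?_)
  have := hξ i hi
  rw [integral_const_mul, integral_exp_neg_mul_expMeasure ha (by positivity), add_comm a]

theorem IndepFun.map_div_eq_withDensity_of_expMeasure {ι : Type*} (s : Finset ι) (c ξ : ι → ℝ)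
    (hξ : ∀ i ∈ s, 0 ≤ ξ i) {a : ℝ} (ha : 0 < a) {W Z : Ω → ℝ} (hWZ : IndepFun W Z P)
    (hW : Measurable W) (hZ : Measurable Z) (hZlaw : P.map Z = expMeasure a)
    (hWcdf : ∀ t, 0 ≤ t → (P.map W).real (Iic t) = 1 - ∑ i ∈ s, c i * exp (-(ξ i * t)))
    (hc : ∑ i ∈ s, c i = 1) :
    P.map (fun ω => W ω / Z ω) = volume.withDensity fun x => ENNReal.ofReal
      (indicator (Ici 0) (fun x => ∑ i ∈ s, c i * (ξ i * a * ((ξ i * x + a) ^ 2)⁻¹)) x) := by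
  have hcdf := fun x (hx : 0 ≤ x) =>
    hWZ.measureReal_map_div_Iic_of_expMeasure s c ξ hξ ha hW hZ hZlaw hWcdf hx
  refine Measure.eq_withDensity_of_hasDerivAt ?_ hcdf fun x hx => ?_
  · rw [← measureReal_eq_zero_iff, hcdf 0 le_rfl]
    simp [ha.ne', hc]
  · simpa using (hasDerivAt_sum_mul_div_mul_add s c ξ fun i hi =>
      (by have := hξ i hi; positivity : 0 < ξ i * x + a).ne').const_sub 1

end ProbabilityTheory

/-- Density of `𝒳 = min{δ_sr, δ_sd}/λ_sp`, where `δ_sr` and `δ_sd` are maxima of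
`N_r` (resp. `N_d`) i.i.d. exponentials, all independent of the exponential `λ_sp`. -/
theorem density_X_selection_combining
    {Ω : Type*} [MeasurableSpace Ω] (P : Measure Ω) [IsProbabilityMeasure P]
    (Nr Nd : ℕ) (hNr : 1 ≤ Nr) (hNd : 1 ≤ Nd)
    (Ωsr Ωsd Ωsp : ℝ) (hΩsr : 0 < Ωsr) (hΩsd : 0 < Ωsd) (hΩsp : 0 < Ωsp)
    (X : Fin Nr → Ω → ℝ) (Y : Fin Nd → Ω → ℝ) (Z : Ω → ℝ)
    (hX : ∀ i, Measurable (X i)) (hY : ∀ j, Measurable (Y j)) (hZ : Measurable Z)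
    (hInd : iIndepFun
      (Sum.elim (Sum.elim X Y) (fun _ : Unit => Z)) P)
    (hXlaw : ∀ i, P.map (X i) = expMeasure (1 / Ωsr))
    (hYlaw : ∀ j, P.map (Y j) = expMeasure (1 / Ωsd))
    (hZlaw : P.map Z = expMeasure (1 / Ωsp))
    (ξ : ℕ → ℕ → ℝ) (hξ : ∀ k j, ξ k j = (k : ℝ) / Ωsr + (j : ℝ) / Ωsd) :
    P.map (fun ω => min (⨆ i, X i ω) (⨆ j, Y j ω) / Z ω)
      = volume.withDensity
          (fun x => ENNReal.ofReal
            (indicator (Ici 0)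
              (fun x => ∑ k ∈ Finset.Icc 1 Nr, ∑ j ∈ Finset.Icc 1 Nd,
                (-1 : ℝ) ^ (k + j) * (Nr.choose k : ℝ) * (Nd.choose j : ℝ) *
                  ((ξ k j / Ωsp) * ((ξ k j * x + 1 / Ωsp) ^ 2)⁻¹)) x)) := by
  have : Nonempty (Fin Nr) := ⟨⟨0, hNr⟩⟩
  have : Nonempty (Fin Nd) := ⟨⟨0, hNd⟩⟩
  have hXY : iIndepFun (Sum.elim X Y) P := hInd.precomp (g := Sum.inl) Sum.inl_injective
  have hWZ : IndepFun (fun ω => min (⨆ i, X i ω) (⨆ j, Y j ω)) Z P :=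
    (hInd.indepFun_sumElim (Sum.forall.mpr ⟨hX, hY⟩) fun _ => hZ).comp
      (φ := fun v : Fin Nr ⊕ Fin Nd → ℝ => min (⨆ i, v (.inl i)) (⨆ j, v (.inr j)))
      (ψ := fun u : Unit → ℝ => u ())
      ((Measurable.iSup fun i => measurable_pi_apply (Sum.inl i)).min
        (Measurable.iSup fun j => measurable_pi_apply (Sum.inr j))) (measurable_pi_apply ())
  have hexpand := fun t => one_sub_one_sub_exp_pow_mul_eq_sum (1 / Ωsr) (1 / Ωsd) t Nr Nd
  simp only [mul_one_div, ← hξ] at hexpand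
  rw [hWZ.map_div_eq_withDensity_of_expMeasure (Finset.Icc 1 Nr ×ˢ Finset.Icc 1 Nd)
    (fun p => (-1) ^ (p.1 + p.2) * (Nr.choose p.1 : ℝ) * (Nd.choose p.2 : ℝ))
    (fun p => ξ p.1 p.2) (fun p _ => by rw [hξ]; positivity) (by positivity)
    ((Measurable.iSup hX).min (Measurable.iSup hY)) hZ hZlaw
    (fun t ht => by
      rw [measureReal_map_min_iSup_Iic_of_expMeasure hX hY hXY (by positivity) (by positivity)
        hXlaw hYlaw ht, Fintype.card_fin, Fintype.card_fin, hexpand])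
    (by simpa [zero_pow (by omega : Nr ≠ 0), zero_pow (by omega : Nd ≠ 0)] using (hexpand 0).symm)]
  simp only [Finset.sum_product, mul_one_div]
end
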